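/- arXiv:2409.14124 — 2 statements merged into one kernel-verified Lean document; each statement's English description precedes it below -/
import Mathlib

section
/- Jacobi triple product for Θ_3: ∑_{n ∈ ℤ} q^{n^2} t^n = ∏_{m=1}^∞ (1 − q^{2m})(1 + q^{2m−1} t)(1 + q^{2m−1}/t), for 0 < |q| < 1 and t ≠ 0. -/
open Finset Filter Topology

noncomputable section JTP

/-- Finite q-Pochhammer: `∏_{m=1}^N (1 - p^m)`. -/
def jtpPhi (p : ℂ) (N : ℕ) : ℂ := ∏ m ∈ Finset.range N, (1 - p ^ (m + 1))

/-- Reciprocal Pochhammer extended by zero to negative integers. -/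
def jtpPsi (p : ℂ) (k : ℤ) : ℂ := if 0 ≤ k then (jtpPhi p k.toNat)⁻¹ else 0

/-- Scaled Gaussian binomial coefficient `(p;p)_{2N} / ((p;p)_{N+n} (p;p)_{N-n})`. -/
def jtpB (p : ℂ) (N : ℕ) (n : ℤ) : ℂ := jtpPhi p (2 * N) * jtpPsi p (N + n) * jtpPsi p (N - n)

lemma jtpPhi_zero (p : ℂ) : jtpPhi p 0 = 1 := by simp [jtpPhi]

lemma jtpPhi_succ (p : ℂ) (N : ℕ) : jtpPhi p (N + 1) = jtpPhi p N * (1 - p ^ (N + 1)) := by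
  simp [jtpPhi, Finset.prod_range_succ]

lemma one_sub_pow_ne_zero {p : ℂ} (hp : ‖p‖ < 1) (m : ℕ) : 1 - p ^ (m + 1) ≠ 0 := by
  have : ‖p ^ (m + 1)‖ < 1 := by
    rw [norm_pow]
    exact pow_lt_one₀ (norm_nonneg _) hp (Nat.succ_ne_zero m)
  intro h
  rw [sub_eq_zero] at h
  rw [← h] at this
  simp at this

lemma jtpPhi_ne_zero {p : ℂ} (hp : ‖p‖ < 1) (N : ℕ) : jtpPhi p N ≠ 0 :=
  Finset.prod_ne_zero_iff.2 fun m _ => one_sub_pow_ne_zero hp m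

lemma jtpPsi_neg {p : ℂ} {k : ℤ} (hk : k < 0) : jtpPsi p k = 0 := by
  simp [jtpPsi, not_le.2 hk]

lemma jtpPsi_rec {p : ℂ} (hp : p ≠ 0) (hp1 : ‖p‖ < 1) (k : ℤ) :
    jtpPsi p k = jtpPsi p (k + 1) * (1 - p ^ (k + 1)) := by
  rcases lt_trichotomy k (-1) with h | h | h
  · rw [jtpPsi_neg (by omega), jtpPsi_neg (by omega : k + 1 < 0), zero_mul]
  · subst h; simp [jtpPsi]
  · have hk : 0 ≤ k := by omega
    have hk1 : 0 ≤ k + 1 := by omega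
    rw [jtpPsi, jtpPsi, if_pos hk, if_pos hk1]
    have h2 : (k + 1).toNat = k.toNat + 1 := by omega
    rw [h2, jtpPhi_succ]
    have h3 : (p : ℂ) ^ (k + 1) = p ^ (k.toNat + 1) := by
      rw [← zpow_natCast]
      congr 1
      omega
    rw [h3, mul_inv]
    rw [mul_assoc, inv_mul_cancel₀ (one_sub_pow_ne_zero hp1 k.toNat), mul_one]

-- more below

lemma jtpB_rec {p : ℂ} (hp : p ≠ 0) (hp1 : ‖p‖ < 1) (N : ℕ) (n : ℤ) :
    jtpB p (N + 1) n = (1 + p ^ (2 * N + 1)) * jtpB p N n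
      + p ^ ((N : ℤ) + 1 - n) * jtpB p N (n - 1)
      + p ^ ((N : ℤ) + 1 + n) * jtpB p N (n + 1) := by
  have key : ∀ k : ℤ, jtpPsi p (k - 1) = jtpPsi p k * (1 - p ^ k) := by
    intro k
    have := jtpPsi_rec hp hp1 (k - 1)
    simpa using this
  have key2 : ∀ k : ℤ, jtpPsi p (k - 1 - 1) = jtpPsi p k * (1 - p ^ k) * (1 - p ^ (k - 1)) := by
    intro k
    rw [key (k - 1), key k]
  set A : ℤ := (N : ℤ) + 1 + n with hA
  set B : ℤ := (N : ℤ) + 1 - n with hB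
  unfold jtpB
  have hPhi : jtpPhi p (2 * (N + 1)) =
      jtpPhi p (2 * N) * ((1 - p ^ (2 * N + 1)) * (1 - p ^ (2 * N + 2))) := by
    have h : 2 * (N + 1) = (2 * N + 1) + 1 := by ring
    rw [h, jtpPhi_succ, jtpPhi_succ]; ring
  have e0 : ((N : ℤ) + 1) + n = A := rfl
  have e0' : ((N : ℤ) + 1) - n = B := rfl
  have e1 : (N : ℤ) + n = A - 1 := by omega
  have e2 : (N : ℤ) - n = B - 1 := by omega
  have e3 : (N : ℤ) + (n - 1) = A - 1 - 1 := by omega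
  have e4 : (N : ℤ) - (n - 1) = B - 1 + 1 := by omega
  have e4' : B - 1 + 1 = B := by omega
  have e5 : (N : ℤ) + (n + 1) = A - 1 + 1 := by omega
  have e5' : A - 1 + 1 = A := by omega
  have e6 : (N : ℤ) - (n + 1) = B - 1 - 1 := by omega
  push_cast
  rw [e0, e0', e1, e2, e3, e4, e4', e5, e5', e6, hPhi, key A, key B, key2 A, key2 B]
  -- now pure zpow algebra
  have hxy2 : (p : ℂ) ^ (2 * N + 2) = p ^ A * p ^ B := by
    rw [← zpow_add₀ hp]
    rw [← zpow_natCast p (2 * N + 2)]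
    congr 1
    omega
  have hxy1 : (p : ℂ) ^ (2 * N + 1) = p ^ A * p ^ B * p⁻¹ := by
    rw [← zpow_add₀ hp, ← zpow_sub_one₀ hp, ← zpow_natCast p (2 * N + 1)]
    congr 1
    omega
  have hA1 : p ^ (A - 1) = p ^ A * p⁻¹ := zpow_sub_one₀ hp A
  have hB1 : p ^ (B - 1) = p ^ B * p⁻¹ := zpow_sub_one₀ hp B
  rw [hxy2, hxy1, hA1, hB1]
  field_simp
  ring

/-- Summand of the theta series with Gaussian-binomial weight. -/
def jtpA (q t : ℂ) (N : ℕ) (n : ℤ) : ℂ := jtpB (q ^ 2) N n * (q ^ (n ^ 2) * t ^ n)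

lemma jtpA_rec {q t : ℂ} (hq : q ≠ 0) (hq1 : ‖q‖ < 1) (ht : t ≠ 0) (N : ℕ) (n : ℤ) :
    jtpA q t (N + 1) n = (1 + (q ^ 2) ^ (2 * N + 1)) * jtpA q t N n
      + q ^ (2 * N + 1) * t * jtpA q t N (n - 1)
      + q ^ (2 * N + 1) * t⁻¹ * jtpA q t N (n + 1) := by
  have hp : (q ^ 2 : ℂ) ≠ 0 := pow_ne_zero _ hq
  have hp1 : ‖(q : ℂ) ^ 2‖ < 1 := by
    rw [norm_pow]; exact pow_lt_one₀ (norm_nonneg _) hq1 two_ne_zero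
  unfold jtpA
  rw [jtpB_rec hp hp1 N n]
  have h1 : ((q : ℂ) ^ 2) ^ ((N : ℤ) + 1 - n) * (q ^ (n ^ 2) * t ^ n)
      = q ^ (2 * N + 1) * t * (q ^ ((n - 1) ^ 2) * t ^ (n - 1)) := by
    rw [← zpow_natCast q 2, ← zpow_mul, ← mul_assoc, ← zpow_add₀ hq]
    rw [show t ^ n = t ^ (n - 1) * t by rw [← zpow_add_one₀ ht, sub_add_cancel]]
    rw [← zpow_natCast q (2 * N + 1)]
    push_cast
    rw [show (2 : ℤ) * ((N : ℤ) + 1 - n) + n ^ 2 = (2 * (N : ℤ) + 1) + (n - 1) ^ 2 by ring,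
      zpow_add₀ hq]
    ring
  have h2 : ((q : ℂ) ^ 2) ^ ((N : ℤ) + 1 + n) * (q ^ (n ^ 2) * t ^ n)
      = q ^ (2 * N + 1) * t⁻¹ * (q ^ ((n + 1) ^ 2) * t ^ (n + 1)) := by
    rw [← zpow_natCast q 2, ← zpow_mul, ← mul_assoc, ← zpow_add₀ hq]
    rw [show (t : ℂ) ^ n = t ^ (n + 1) * t⁻¹ by
      rw [← zpow_sub_one₀ ht, add_sub_cancel_right]]
    rw [← zpow_natCast q (2 * N + 1)]
    push_cast
    rw [show (2 : ℤ) * ((N : ℤ) + 1 + n) + n ^ 2 = (2 * (N : ℤ) + 1) + (n + 1) ^ 2 by ring,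
      zpow_add₀ hq]
    ring
  linear_combination jtpB (q ^ 2) N (n - 1) * h1 + jtpB (q ^ 2) N (n + 1) * h2

lemma jtpB_eq_zero {p : ℂ} {N : ℕ} {n : ℤ} (h : (N : ℤ) < n ∨ n < -(N : ℤ)) :
    jtpB p N n = 0 := by
  unfold jtpB
  rcases h with hn | hn
  · rw [jtpPsi_neg (by omega : (N : ℤ) - n < 0)]; ring
  · rw [jtpPsi_neg (by omega : (N : ℤ) + n < 0)]; ring

lemma jtpA_summable (q t : ℂ) (N : ℕ) : Summable (fun n => jtpA q t N n) := by
  apply summable_of_ne_finset_zero (s := Finset.Icc (-(N : ℤ)) N)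
  intro n hn
  simp only [Finset.mem_Icc, not_and_or, not_le] at hn
  unfold jtpA
  rw [jtpB_eq_zero (by omega)]
  ring

lemma jtp_finite {q t : ℂ} (hq : q ≠ 0) (hq1 : ‖q‖ < 1) (ht : t ≠ 0) (N : ℕ) :
    ∑' n : ℤ, jtpA q t N n
      = ∏ m ∈ Finset.range N, ((1 + q ^ (2 * m + 1) * t) * (1 + q ^ (2 * m + 1) * t⁻¹)) := by
  induction N with
  | zero =>
    rw [Finset.prod_range_zero]
    rw [tsum_eq_single 0 (fun n hn => by
      unfold jtpA
      rw [jtpB_eq_zero (by omega)]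
      ring)]
    simp [jtpA, jtpB, jtpPsi, jtpPhi]
  | succ N ih =>
    rw [Finset.prod_range_succ, ← ih]
    have expand : ((1 : ℂ) + q ^ (2 * N + 1) * t) * (1 + q ^ (2 * N + 1) * t⁻¹)
        = (1 + (q ^ 2) ^ (2 * N + 1)) + q ^ (2 * N + 1) * t + q ^ (2 * N + 1) * t⁻¹ := by
      field_simp
      ring
    rw [expand]
    have s0 := jtpA_summable q t N
    have e1 : (∑' n : ℤ, jtpA q t N n) * (1 + (q ^ 2) ^ (2 * N + 1))
        = ∑' n : ℤ, (1 + (q ^ 2) ^ (2 * N + 1)) * jtpA q t N n := by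
      rw [tsum_mul_left, mul_comm]
    have e2 : (∑' n : ℤ, jtpA q t N n) * (q ^ (2 * N + 1) * t)
        = ∑' n : ℤ, q ^ (2 * N + 1) * t * jtpA q t N (n - 1) := by
      rw [mul_comm, ← tsum_mul_left]
      exact ((Equiv.subRight (1 : ℤ)).tsum_eq
        (fun m => q ^ (2 * N + 1) * t * jtpA q t N m)).symm
    have e3 : (∑' n : ℤ, jtpA q t N n) * (q ^ (2 * N + 1) * t⁻¹)
        = ∑' n : ℤ, q ^ (2 * N + 1) * t⁻¹ * jtpA q t N (n + 1) := by
      rw [mul_comm, ← tsum_mul_left]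
      exact ((Equiv.addRight (1 : ℤ)).tsum_eq
        (fun m => q ^ (2 * N + 1) * t⁻¹ * jtpA q t N m)).symm
    have s1 : Summable (fun n : ℤ => (1 + (q ^ 2) ^ (2 * N + 1)) * jtpA q t N n) :=
      s0.mul_left _
    have s2 : Summable (fun n : ℤ => q ^ (2 * N + 1) * t * jtpA q t N (n - 1)) :=
      (s0.mul_left _).comp_injective sub_left_injective
    have s3 : Summable (fun n : ℤ => q ^ (2 * N + 1) * t⁻¹ * jtpA q t N (n + 1)) :=
      (s0.mul_left _).comp_injective (add_left_injective 1)
    rw [mul_add, mul_add, e1, e2, e3, ← Summable.tsum_add s1 s2, ← Summable.tsum_add (s1.add s2) s3]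
    exact tsum_congr fun n => jtpA_rec hq hq1 ht N n

/-! ### Convergence machinery -/

lemma jtp_hasProd_of_log (f : ℕ → ℂ) (h0 : ∀ m, f m ≠ 0)
    (h : Summable fun m => Complex.log (f m)) :
    HasProd f (Complex.exp (∑' m, Complex.log (f m))) := by
  have h2 : (fun m => Complex.exp (Complex.log (f m))) = f :=
    funext fun m => Complex.exp_log (h0 m)
  have h3 := h.hasSum.cexp
  rwa [show (Complex.exp ∘ fun m => Complex.log (f m))
      = fun m => Complex.exp (Complex.log (f m)) from rfl, h2] at h3

lemma jtp_summable_log (f : ℕ → ℂ) (h : Summable fun m => ‖f m - 1‖) :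
    Summable fun m => Complex.log (f m) := by
  apply Summable.of_norm_bounded_eventually_nat (g := fun m => 3 / 2 * ‖f m - 1‖)
    (h.mul_left _)
  have h0 : Filter.Tendsto (fun m => ‖f m - 1‖) Filter.atTop (nhds 0) :=
    h.tendsto_atTop_zero
  filter_upwards [h0.eventually_lt_const (by norm_num : (0 : ℝ) < 1 / 2)] with m hm
  have := Complex.norm_log_one_add_half_le_self (z := f m - 1) hm.le
  rwa [add_sub_cancel] at this

lemma jtp_geom_summable {x : ℝ} (hx0 : 0 ≤ x) (hx1 : x < 1) (C : ℝ) :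
    Summable fun m : ℕ => C * x ^ m :=
  (summable_geometric_of_lt_one hx0 hx1).mul_left C

/-- For a family `f m = 1 + c * q^{k} * x^m`-style, norm summability of `f - 1`. -/
lemma jtp_summable_sub_one {q : ℂ} (hq1 : ‖q‖ < 1) (c : ℂ) :
    Summable fun m : ℕ => ‖(1 + q ^ (2 * m + 1) * c) - 1‖ := by
  have he : (fun m : ℕ => ‖(1 + q ^ (2 * m + 1) * c) - 1‖)
      = fun m : ℕ => (‖c‖ * ‖q‖) * (‖q‖ ^ 2) ^ m := by
    funext m
    rw [add_sub_cancel_left, norm_mul, norm_pow]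
    ring
  rw [he]
  have hx1 : ‖q‖ ^ 2 < 1 := pow_lt_one₀ (norm_nonneg _) hq1 two_ne_zero
  exact jtp_geom_summable (by positivity) hx1 _

lemma jtpPhi_sub_one_summable {p : ℂ} (hp1 : ‖p‖ < 1) :
    Summable fun m : ℕ => ‖(1 - p ^ (m + 1)) - 1‖ := by
  have he : (fun m : ℕ => ‖(1 - p ^ (m + 1)) - 1‖) = fun m : ℕ => ‖p‖ * ‖p‖ ^ m := by
    funext m
    rw [sub_sub_cancel_left, norm_neg, norm_pow]
    ring
  rw [he]
  exact jtp_geom_summable (norm_nonneg _) hp1 _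

/-- The partial Pochhammer products converge to a nonzero limit. -/
lemma jtpPhi_tendsto {p : ℂ} (hp1 : ‖p‖ < 1) :
    ∃ L : ℂ, L ≠ 0 ∧ Filter.Tendsto (fun N => jtpPhi p N) Filter.atTop (nhds L) := by
  have h := jtp_hasProd_of_log (fun m => 1 - p ^ (m + 1))
    (fun m => one_sub_pow_ne_zero hp1 m)
    (jtp_summable_log _ (jtpPhi_sub_one_summable hp1))
  exact ⟨_, Complex.exp_ne_zero _, h.tendsto_prod_nat⟩

/-- Uniform positive lower bound for the partial Pochhammer products. -/
lemma jtpPhi_lower {p : ℂ} (hp1 : ‖p‖ < 1) :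
    ∃ δ : ℝ, 0 < δ ∧ ∀ N, δ ≤ ‖jtpPhi p N‖ := by
  obtain ⟨L, hL0, hT⟩ := jtpPhi_tendsto hp1
  have hLpos : 0 < ‖L‖ := norm_pos_iff.2 hL0
  have hL : 0 < ‖L‖ / 2 := by linarith
  have hev : ∀ᶠ N in Filter.atTop, ‖L‖ / 2 < ‖jtpPhi p N‖ :=
    (hT.norm).eventually_const_lt (by linarith)
  obtain ⟨M, hM⟩ := Filter.eventually_atTop.1 hev
  have hne : (Finset.range (M + 1)).Nonempty := ⟨0, by simp⟩
  set δ₀ : ℝ := (Finset.range (M + 1)).inf' hne fun N => ‖jtpPhi p N‖ with hδ₀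
  have hδ₀pos : 0 < δ₀ := by
    rw [hδ₀, Finset.lt_inf'_iff]
    exact fun i _ => norm_pos_iff.2 (jtpPhi_ne_zero hp1 i)
  refine ⟨min (‖L‖ / 2) δ₀, lt_min hL hδ₀pos, fun N => ?_⟩
  rcases le_or_gt M N with h | h
  · exact le_trans (min_le_left _ _) (hM N h).le
  · exact le_trans (min_le_right _ _)
      (Finset.inf'_le _ (Finset.mem_range.2 (by omega)))

/-- Uniform upper bound for the partial Pochhammer products. -/
lemma jtpPhi_upper {p : ℂ} (hp1 : ‖p‖ < 1) :
    ∀ N, ‖jtpPhi p N‖ ≤ Real.exp (‖p‖ * (1 - ‖p‖)⁻¹) := by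
  intro N
  have h0 : (0 : ℝ) ≤ ‖p‖ := norm_nonneg _
  calc ‖jtpPhi p N‖ = ∏ m ∈ Finset.range N, ‖1 - p ^ (m + 1)‖ := norm_prod _ _
    _ ≤ ∏ m ∈ Finset.range N, Real.exp (‖p‖ ^ (m + 1)) := by
        apply Finset.prod_le_prod (fun m _ => norm_nonneg _)
        intro m _
        calc ‖1 - p ^ (m + 1)‖ ≤ ‖(1 : ℂ)‖ + ‖p ^ (m + 1)‖ := norm_sub_le _ _
          _ = ‖p‖ ^ (m + 1) + 1 := by rw [norm_one, norm_pow]; ring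
          _ ≤ Real.exp (‖p‖ ^ (m + 1)) := Real.add_one_le_exp _
    _ = Real.exp (∑ m ∈ Finset.range N, ‖p‖ ^ (m + 1)) := (Real.exp_sum _ _).symm
    _ ≤ Real.exp (‖p‖ * (1 - ‖p‖)⁻¹) := by
        apply Real.exp_le_exp.2
        have hs : Summable fun m : ℕ => ‖p‖ * ‖p‖ ^ m :=
          jtp_geom_summable h0 hp1 _
        have h1 : ∀ m : ℕ, ‖p‖ ^ (m + 1) = ‖p‖ * ‖p‖ ^ m := fun m => by ring
        calc ∑ m ∈ Finset.range N, ‖p‖ ^ (m + 1)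
            = ∑ m ∈ Finset.range N, ‖p‖ * ‖p‖ ^ m := by
              exact Finset.sum_congr rfl fun m _ => h1 m
          _ ≤ ∑' m : ℕ, ‖p‖ * ‖p‖ ^ m :=
              Summable.sum_le_tsum _ (fun m _ => by positivity) hs
          _ = ‖p‖ * (1 - ‖p‖)⁻¹ := by
              rw [tsum_mul_left, tsum_geometric_of_lt_one h0 hp1]

/-- Pointwise limit of the scaled Gaussian binomial coefficients. -/
lemma jtp_coeff_tendsto {p : ℂ} (hp1 : ‖p‖ < 1) (n : ℤ) :
    Filter.Tendsto (fun N => jtpPhi p N * jtpB p N n) Filter.atTop (nhds 1) := by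
  obtain ⟨L, hL0, hT⟩ := jtpPhi_tendsto hp1
  have T2 : Filter.Tendsto (fun N => jtpPhi p (2 * N)) Filter.atTop (nhds L) :=
    hT.comp (Filter.tendsto_atTop_mono (fun N : ℕ => Nat.le_mul_of_pos_left N two_pos) Filter.tendsto_id)
  have T3 : Filter.Tendsto (fun N : ℕ => jtpPhi p ((N : ℤ) + n).toNat) Filter.atTop (nhds L) :=
    hT.comp (Filter.tendsto_atTop.2 fun b => Filter.eventually_atTop.2
      ⟨b + n.natAbs, fun N hN => by omega⟩)
  have T4 : Filter.Tendsto (fun N : ℕ => jtpPhi p ((N : ℤ) - n).toNat) Filter.atTop (nhds L) :=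
    hT.comp (Filter.tendsto_atTop.2 fun b => Filter.eventually_atTop.2
      ⟨b + n.natAbs, fun N hN => by omega⟩)
  have comb : Filter.Tendsto
      (fun N : ℕ => jtpPhi p N * jtpPhi p (2 * N) *
        ((jtpPhi p ((N : ℤ) + n).toNat)⁻¹ * (jtpPhi p ((N : ℤ) - n).toNat)⁻¹))
      Filter.atTop (nhds (L * L * (L⁻¹ * L⁻¹))) :=
    (hT.mul T2).mul ((T3.inv₀ hL0).mul (T4.inv₀ hL0))
  have hval : L * L * (L⁻¹ * L⁻¹) = 1 := by field_simp
  rw [hval] at comb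
  apply comb.congr'
  filter_upwards [Filter.eventually_atTop.2 ⟨n.natAbs, fun N hN => hN⟩] with N hN
  have h1 : (0 : ℤ) ≤ (N : ℤ) + n := by omega
  have h2 : (0 : ℤ) ≤ (N : ℤ) - n := by omega
  unfold jtpB jtpPsi
  rw [if_pos h1, if_pos h2]
  ring

/-- Uniform bound on the scaled Gaussian binomial coefficients. -/
lemma jtp_coeff_bound {p : ℂ} (hp1 : ‖p‖ < 1) :
    ∃ C : ℝ, 0 < C ∧ ∀ N n, ‖jtpPhi p N * jtpB p N n‖ ≤ C := by
  obtain ⟨δ, hδ, hlow⟩ := jtpPhi_lower hp1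
  set E := Real.exp (‖p‖ * (1 - ‖p‖)⁻¹) with hE
  have hEpos : 0 < E := Real.exp_pos _
  refine ⟨E * E * (δ⁻¹ * δ⁻¹), by positivity, fun N n => ?_⟩
  rcases lt_or_ge ((N : ℤ) + n) 0 with h1 | h1
  · unfold jtpB
    rw [jtpPsi_neg h1]
    simp only [mul_zero, zero_mul, norm_zero]
    positivity
  rcases lt_or_ge ((N : ℤ) - n) 0 with h2 | h2
  · unfold jtpB
    rw [jtpPsi_neg h2]
    simp only [mul_zero, norm_zero]
    positivity
  unfold jtpB jtpPsi
  rw [if_pos h1, if_pos h2]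
  rw [show jtpPhi p N * (jtpPhi p (2 * N) * (jtpPhi p ((N : ℤ) + n).toNat)⁻¹ *
      (jtpPhi p ((N : ℤ) - n).toNat)⁻¹)
    = jtpPhi p N * jtpPhi p (2 * N) *
      ((jtpPhi p ((N : ℤ) + n).toNat)⁻¹ * (jtpPhi p ((N : ℤ) - n).toNat)⁻¹) from by ring]
  rw [norm_mul, norm_mul, norm_mul, norm_inv, norm_inv]
  have hb : ∀ M : ℕ, ‖jtpPhi p M‖⁻¹ ≤ δ⁻¹ := fun M =>
    inv_anti₀ hδ (hlow M)
  have hnn : ∀ M : ℕ, (0:ℝ) ≤ ‖jtpPhi p M‖ := fun M => norm_nonneg _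
  apply mul_le_mul
  · exact mul_le_mul (jtpPhi_upper hp1 N) (jtpPhi_upper hp1 (2 * N)) (hnn _)
      hEpos.le
  · exact mul_le_mul (hb _) (hb _) (by positivity) (by positivity)
  · positivity
  · positivity

/-- The dominating function for Tannery's theorem. -/
lemma jtp_dom_summable {r u : ℝ} (hr0 : 0 ≤ r) (hr1 : r < 1) (hu : 0 ≤ u) (C : ℝ) :
    Summable fun n : ℤ => C * (r ^ n.natAbs ^ 2 * u ^ n.natAbs) := by
  have hnat : Summable fun k : ℕ => r ^ k ^ 2 * u ^ k := by
    apply summable_of_ratio_norm_eventually_le (r := 1 / 2) (by norm_num)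
    have hto : Filter.Tendsto (fun k : ℕ => (r * u) * (r ^ 2) ^ k) Filter.atTop (nhds 0) := by
      have := (tendsto_pow_atTop_nhds_zero_of_lt_one (by positivity)
        (by nlinarith : r ^ 2 < 1)).const_mul (r * u)
      simpa using this
    filter_upwards [hto.eventually_lt_const (by norm_num : (0 : ℝ) < 1 / 2)] with k hk
    have h1 : (0:ℝ) ≤ r ^ k ^ 2 * u ^ k := by positivity
    have h2 : (0:ℝ) ≤ r ^ (k + 1) ^ 2 * u ^ (k + 1) := by positivity
    rw [Real.norm_eq_abs, Real.norm_eq_abs, abs_of_nonneg h1, abs_of_nonneg h2]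
    have h3 : r ^ ((k+1) ^ 2) * u ^ (k+1) = ((r * u) * (r ^ 2) ^ k) * (r ^ (k ^ 2) * u ^ k) := by
      ring
    rw [h3]
    exact mul_le_mul_of_nonneg_right hk.le h1
  have hnatC : Summable fun k : ℕ => C * (r ^ k ^ 2 * u ^ k) := hnat.mul_left C
  apply Summable.of_nat_of_neg
  · simpa using hnatC
  · simpa using hnatC

/-- Norm bound for the theta summand. -/
lemma jtp_term_bound {q t : ℂ} (ht : t ≠ 0) (n : ℤ) :
    ‖q ^ n ^ 2 * t ^ n‖ ≤ ‖q‖ ^ n.natAbs ^ 2 * (max ‖t‖ ‖t⁻¹‖) ^ n.natAbs := by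
  rw [norm_mul]
  apply mul_le_mul _ _ (norm_nonneg _) (by positivity)
  · have h1 : (q : ℂ) ^ (n ^ 2) = q ^ (n.natAbs ^ 2 : ℕ) := by
      rw [← zpow_natCast q (n.natAbs ^ 2)]
      congr 1
      rw [← Int.natAbs_pow]
      exact (Int.natAbs_of_nonneg (sq_nonneg n)).symm
    rw [h1, norm_pow]
  · rcases le_or_gt 0 n with hn | hn
    · have h2 : (t : ℂ) ^ n = t ^ (n.natAbs : ℕ) := by
        rw [← zpow_natCast t n.natAbs]
        congr 1
        omega
      rw [h2, norm_pow]
      exact pow_le_pow_left₀ (norm_nonneg _) (le_max_left _ _) _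
    · have h2 : (t : ℂ) ^ n = (t⁻¹) ^ (n.natAbs : ℕ) := by
        rw [← zpow_natCast t⁻¹, inv_zpow, ← zpow_neg]
        congr 1
        omega
      rw [h2, norm_pow]
      exact pow_le_pow_left₀ (norm_nonneg _) (le_max_right _ _) _

/-- Tannery's theorem applied to the finite Jacobi sums. -/
lemma jtp_tendsto_sum {q t : ℂ} (hq0 : 0 < ‖q‖) (hq1 : ‖q‖ < 1) (ht : t ≠ 0) :
    Filter.Tendsto (fun N : ℕ => jtpPhi (q ^ 2) N * ∑' n : ℤ, jtpA q t N n) Filter.atTop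
      (nhds (∑' n : ℤ, q ^ n ^ 2 * t ^ n)) := by
  have hp1 : ‖(q : ℂ) ^ 2‖ < 1 := by
    rw [norm_pow]; exact pow_lt_one₀ (norm_nonneg _) hq1 two_ne_zero
  obtain ⟨C, hC, hbound⟩ := jtp_coeff_bound hp1
  have heq : (fun N : ℕ => jtpPhi (q ^ 2) N * ∑' n : ℤ, jtpA q t N n)
      = fun N : ℕ => ∑' n : ℤ, jtpPhi (q ^ 2) N * jtpA q t N n :=
    funext fun N => (tsum_mul_left).symm
  rw [heq]
  apply tendsto_tsum_of_dominated_convergence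
    (bound := fun n : ℤ => C * (‖q‖ ^ n.natAbs ^ 2 * (max ‖t‖ ‖t⁻¹‖) ^ n.natAbs))
  · exact jtp_dom_summable (norm_nonneg _) hq1 (le_max_of_le_left (norm_nonneg _)) C
  · intro n
    have h1 := (jtp_coeff_tendsto hp1 n).mul_const (q ^ n ^ 2 * t ^ n)
    rw [one_mul] at h1
    apply h1.congr
    intro N
    unfold jtpA
    ring
  · apply Filter.Eventually.of_forall
    intro N n
    have h2 : jtpPhi (q ^ 2) N * jtpA q t N n
        = (jtpPhi (q ^ 2) N * jtpB (q ^ 2) N n) * (q ^ n ^ 2 * t ^ n) := by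
      unfold jtpA; ring
    rw [h2, norm_mul]
    exact mul_le_mul (hbound N n) (jtp_term_bound ht n) (norm_nonneg _) hC.le

end JTP

/-- Jacobi triple product for `Θ₃`:
`∑_{n∈ℤ} q^{n²} t^n = ∏_{m≥1} (1−q^{2m})(1+q^{2m−1}t)(1+q^{2m−1}/t)`,
for `0 < |q| < 1` and `t ≠ 0`. -/
theorem jacobi_triple_product_theta3 (q t : ℂ) (h0 : 0 < ‖q‖) (h1 : ‖q‖ < 1)
    (ht : t ≠ 0) :
    ∑' n : ℤ, q ^ (n ^ 2) * t ^ n =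
      ∏' m : ℕ, ((1 - q ^ (2 * (m + 1))) * (1 + q ^ (2 * m + 1) * t) *
        (1 + q ^ (2 * m + 1) / t)) := by
  have hq : q ≠ 0 := norm_pos_iff.mp h0
  have hp1 : ‖(q : ℂ) ^ 2‖ < 1 := by
    rw [norm_pow]; exact pow_lt_one₀ (norm_nonneg _) h1 two_ne_zero
  set f : ℕ → ℂ := fun m => (1 - q ^ (2 * (m + 1))) * (1 + q ^ (2 * m + 1) * t) *
    (1 + q ^ (2 * m + 1) / t) with hf
  -- the partial products converge to the theta sum
  have key : Filter.Tendsto (fun N : ℕ => ∏ m ∈ Finset.range N, f m) Filter.atTop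
      (nhds (∑' n : ℤ, q ^ (n ^ 2) * t ^ n)) := by
    have hsplit : ∀ N : ℕ, ∏ m ∈ Finset.range N, f m
        = jtpPhi (q ^ 2) N *
          ∏ m ∈ Finset.range N, ((1 + q ^ (2 * m + 1) * t) * (1 + q ^ (2 * m + 1) * t⁻¹)) := by
      intro N
      rw [jtpPhi, ← Finset.prod_mul_distrib]
      apply Finset.prod_congr rfl
      intro m _
      simp only [hf, div_eq_mul_inv, pow_mul]
      ring
    apply (jtp_tendsto_sum h0 h1 ht).congr
    intro N
    rw [hsplit N, jtp_finite hq h1 ht N]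
  by_cases hzero : ∀ m, f m ≠ 0
  · -- all factors nonzero: use multipliability via logs
    have hA0 : ∀ m : ℕ, (1 : ℂ) - q ^ (2 * (m + 1)) ≠ 0 := fun m h =>
      hzero m (by simp only [hf]; rw [h]; ring)
    have hB0 : ∀ m : ℕ, (1 : ℂ) + q ^ (2 * m + 1) * t ≠ 0 := fun m h =>
      hzero m (by simp only [hf]; rw [h]; ring)
    have hC0 : ∀ m : ℕ, (1 : ℂ) + q ^ (2 * m + 1) / t ≠ 0 := fun m h =>
      hzero m (by simp only [hf]; rw [h]; ring)
    have hsA : Summable fun m : ℕ => ‖((1 : ℂ) - q ^ (2 * (m + 1))) - 1‖ :=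
      (jtpPhi_sub_one_summable hp1).congr fun m => by rw [pow_mul]
    have hsB : Summable fun m : ℕ => ‖((1 : ℂ) + q ^ (2 * m + 1) * t) - 1‖ :=
      jtp_summable_sub_one h1 t
    have hsC : Summable fun m : ℕ => ‖((1 : ℂ) + q ^ (2 * m + 1) / t) - 1‖ :=
      (jtp_summable_sub_one h1 t⁻¹).congr fun m => by rw [div_eq_mul_inv]
    have hPA := jtp_hasProd_of_log (fun m => (1 : ℂ) - q ^ (2 * (m + 1))) hA0
      (jtp_summable_log _ hsA)
    have hPB := jtp_hasProd_of_log (fun m => (1 : ℂ) + q ^ (2 * m + 1) * t) hB0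
      (jtp_summable_log _ hsB)
    have hPC := jtp_hasProd_of_log (fun m => (1 : ℂ) + q ^ (2 * m + 1) / t) hC0
      (jtp_summable_log _ hsC)
    have hP : HasProd f
        (Complex.exp (∑' m : ℕ, Complex.log ((1 : ℂ) - q ^ (2 * (m + 1)))) *
          Complex.exp (∑' m : ℕ, Complex.log ((1 : ℂ) + q ^ (2 * m + 1) * t)) *
          Complex.exp (∑' m : ℕ, Complex.log ((1 : ℂ) + q ^ (2 * m + 1) / t))) :=
      (hPA.mul hPB).mul hPC
    rw [tendsto_nhds_unique key hP.tendsto_prod_nat, hP.tprod_eq]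
  · -- some factor vanishes: both sides are zero
    push_neg at hzero
    obtain ⟨m0, hm0⟩ := hzero
    have hP0 : HasProd f 0 := by
      have hev : ∀ᶠ s : Finset ℕ in Filter.atTop, (0 : ℂ) = ∏ i ∈ s, f i := by
        filter_upwards [Filter.eventually_ge_atTop ({m0} : Finset ℕ)] with s hs
        exact (Finset.prod_eq_zero (hs (Finset.mem_singleton_self m0)) hm0).symm
      exact Filter.Tendsto.congr' hev tendsto_const_nhds
    have hzero2 : Filter.Tendsto (fun N : ℕ => ∏ m ∈ Finset.range N, f m) Filter.atTop
        (nhds 0) := by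
      have hev : ∀ᶠ N : ℕ in Filter.atTop, (0 : ℂ) = ∏ m ∈ Finset.range N, f m := by
        filter_upwards [Filter.eventually_ge_atTop (m0 + 1)] with N hN
        exact (Finset.prod_eq_zero (Finset.mem_range.2 (by omega)) hm0).symm
      exact Filter.Tendsto.congr' hev tendsto_const_nhds
    rw [tendsto_nhds_unique key hzero2, hP0.tprod_eq]
end

section
/- With the substitution q = e^{−2πr}, the rescaled expected size of a self-conjugate partition under the Gibbs uniform measure satisfies lim_{r → 0^+} r^2 · ∑_{k=0}^∞ (2k+1) e^{−2π(2k+1)r}/(1 + e^{−2π(2k+1)r}) = 1/96. -/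
open scoped Real


open Filter Real Topology

noncomputable def TT (t : ℝ) : ℝ := t * (1 + t ^ 2) / (1 - t ^ 2) ^ 2

lemma hasSum_TT {t : ℝ} (h0 : 0 ≤ t) (h1 : t < 1) :
    HasSum (fun k : ℕ => (2 * k + 1 : ℝ) * t ^ (2 * k + 1)) (TT t) := by
  have hu : ‖t ^ 2‖ < 1 := by
    rw [Real.norm_eq_abs, abs_pow, abs_of_nonneg h0]
    exact pow_lt_one₀ h0 h1 (by norm_num)
  have hg := hasSum_coe_mul_geometric_of_norm_lt_one (𝕜 := ℝ) hu
  have hgeo := hasSum_geometric_of_norm_lt_one hu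
  have h3 := ((hg.mul_left 2).add hgeo).mul_left t
  have hne : (1 : ℝ) - t ^ 2 ≠ 0 := by nlinarith
  convert h3 using 1
  · rfl
  · funext k
    rw [pow_succ, pow_mul]
    push_cast; ring
  · simp only [TT]; field_simp; ring

lemma hasSum_alt_geom {s : ℝ} (h0 : 0 ≤ s) (h1 : s < 1) :
    HasSum (fun m : ℕ => (-1 : ℝ) ^ m * s ^ (m + 1)) (s / (1 + s)) := by
  have h : ‖-s‖ < 1 := by rwa [norm_neg, Real.norm_eq_abs, abs_of_nonneg h0]
  have := (hasSum_geometric_of_norm_lt_one h).mul_left s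
  convert this using 1
  · rfl
  · funext m; rw [neg_pow]; ring
  · rw [sub_neg_eq_add, div_eq_mul_inv]

lemma stepA {r : ℝ} (hr : 0 < r) :
    (∑' k : ℕ, (2 * k + 1 : ℝ) * Real.exp (-2 * π * (2 * k + 1) * r) /
        (1 + Real.exp (-2 * π * (2 * k + 1) * r)))
      = ∑' m : ℕ, (-1 : ℝ) ^ m * TT (Real.exp (-(2 * π * r)) ^ (m + 1)) := by
  set q : ℝ := Real.exp (-(2 * π * r)) with hq
  have hq0 : 0 < q := Real.exp_pos _
  have hq1 : q < 1 := by
    rw [hq, Real.exp_lt_one_iff]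
    have := Real.pi_pos
    nlinarith
  -- the double-indexed family
  set f : ℕ × ℕ → ℝ := fun p =>
    (-1 : ℝ) ^ p.2 * ((2 * p.1 + 1 : ℝ) * q ^ ((2 * p.1 + 1) * (p.2 + 1))) with hf
  -- summability of f
  have hSf : Summable f := by
    have hSk : Summable (fun k : ℕ => (2 * (k : ℝ) + 1) * q ^ (k + 1)) := by
      have h1 := (hasSum_coe_mul_geometric_of_norm_lt_one (𝕜 := ℝ)
        (by rwa [Real.norm_eq_abs, abs_of_nonneg hq0.le])).summable
      have h2 := (hasSum_geometric_of_norm_lt_one (ξ := q)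
        (by rwa [Real.norm_eq_abs, abs_of_nonneg hq0.le])).summable
      have := (((h1.mul_left 2).add h2).mul_left q)
      exact this.congr fun k => by rw [pow_succ]; push_cast; ring
    have hSm : Summable (fun m : ℕ => q ^ m) :=
      summable_geometric_of_lt_one hq0.le hq1
    have hb : Summable (fun p : ℕ × ℕ =>
        ((2 * (p.1 : ℝ) + 1) * q ^ (p.1 + 1)) * q ^ p.2) :=
      hSk.mul_of_nonneg hSm (fun k => by positivity) (fun m => by positivity)
    refine hb.of_norm_bounded fun p => ?_
    rcases p with ⟨k, m⟩
    have h1 : ‖f (k, m)‖ = (2 * (k : ℝ) + 1) * q ^ ((2 * k + 1) * (m + 1)) := by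
      rw [hf]
      simp only [norm_mul, norm_pow, norm_neg, norm_one, one_pow, one_mul]
      rw [Real.norm_eq_abs, Real.norm_eq_abs, abs_of_nonneg (by positivity),
        abs_of_nonneg hq0.le]
    rw [h1, mul_assoc, ← pow_add]
    refine mul_le_mul_of_nonneg_left ?_ (by positivity)
    exact pow_le_pow_of_le_one hq0.le hq1.le (by nlinarith)
  -- inner expansion for fixed k
  have hinner : ∀ k : ℕ,
      HasSum (fun m : ℕ => f (k, m))
        ((2 * k + 1 : ℝ) * Real.exp (-2 * π * (2 * k + 1) * r) /
          (1 + Real.exp (-2 * π * (2 * k + 1) * r))) := by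
    intro k
    have hexp : Real.exp (-2 * π * (2 * (k : ℝ) + 1) * r) = q ^ (2 * k + 1) := by
      rw [hq, ← Real.exp_nat_mul]
      congr 1
      push_cast; ring
    have hs0 : (0 : ℝ) ≤ q ^ (2 * k + 1) := by positivity
    have hs1 : q ^ (2 * k + 1) < 1 := pow_lt_one₀ hq0.le hq1 (by omega)
    have := (hasSum_alt_geom hs0 hs1).mul_left (2 * (k : ℝ) + 1)
    rw [hexp]
    convert this using 1
    · rfl
    · funext m
      simp only [hf, ← pow_mul]
      ring_nf
    · rw [mul_div_assoc]
  have houter : ∀ m : ℕ,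
      HasSum (fun k : ℕ => f (k, m)) ((-1 : ℝ) ^ m * TT (q ^ (m + 1))) := by
    intro m
    have ht0 : (0 : ℝ) ≤ q ^ (m + 1) := by positivity
    have ht1 : q ^ (m + 1) < 1 := pow_lt_one₀ hq0.le hq1 (by omega)
    have := (hasSum_TT ht0 ht1).mul_left ((-1 : ℝ) ^ m)
    convert this using 1
    · rfl
    funext k
    simp only [hf, ← pow_mul]
    ring_nf
  calc (∑' k : ℕ, (2 * k + 1 : ℝ) * Real.exp (-2 * π * (2 * k + 1) * r) /
        (1 + Real.exp (-2 * π * (2 * k + 1) * r)))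
      = ∑' k : ℕ, ∑' m : ℕ, f (k, m) := tsum_congr fun k => (hinner k).tsum_eq.symm
    _ = ∑' m : ℕ, ∑' k : ℕ, f (k, m) := (Summable.tsum_comm (f := fun k m => f (k, m)) hSf).symm
    _ = ∑' m : ℕ, (-1 : ℝ) ^ m * TT (q ^ (m + 1)) := tsum_congr fun m => (houter m).tsum_eq

lemma tendsto_div_one_sub_exp {c : ℝ} (hc : 0 < c) :
    Tendsto (fun r : ℝ => r / (1 - Real.exp (-(c * r)))) (𝓝[>] 0) (𝓝 c⁻¹) := by
  have hd : HasDerivAt (fun r : ℝ => 1 - Real.exp (-(c * r))) c 0 := by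
    have h1 : HasDerivAt (fun r : ℝ => -(c * r)) (-c) 0 := by
      have := ((hasDerivAt_id (0 : ℝ)).const_mul c).neg; rw [mul_one] at this; exact this
    have h2 := h1.exp
    have h3 := h2.const_sub 1
    simpa using h3
  have hslope := hasDerivAt_iff_tendsto_slope.mp hd
  have h2 : Tendsto (fun r : ℝ => (1 - Real.exp (-(c * r))) / r) (𝓝[>] 0) (𝓝 c) := by
    refine (hslope.mono_left (nhdsWithin_mono _ ?_)).congr fun r => ?_
    · intro x hx
      exact ne_of_gt hx
    · simp [slope_def_field]
  have h3 := h2.inv₀ (ne_of_gt hc)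
  exact h3.congr fun r => by rw [inv_div]

lemma stepB (m : ℕ) :
    Tendsto (fun r : ℝ => (-1 : ℝ) ^ m * (r ^ 2 * TT (Real.exp (-(2 * π * r)) ^ (m + 1))))
      (𝓝[>] 0)
      (𝓝 ((-1 : ℝ) ^ m * (1 / (8 * π ^ 2 * ((m : ℝ) + 1) ^ 2)))) := by
  set c : ℝ := 2 * π * ((m : ℝ) + 1) with hcdef
  have hπ := Real.pi_pos
  have hc : 0 < c := by positivity
  have hkey : ∀ r : ℝ, r ^ 2 * TT (Real.exp (-(2 * π * r)) ^ (m + 1))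
      = (Real.exp (-(c * r)) * (1 + Real.exp (-(2 * c * r))))
        * (r / (1 - Real.exp (-(2 * c * r)))) ^ 2 := by
    intro r
    have he1 : Real.exp (-(2 * π * r)) ^ (m + 1) = Real.exp (-(c * r)) := by
      rw [← Real.exp_nat_mul]; congr 1; push_cast; ring
    have he2 : Real.exp (-(c * r)) ^ 2 = Real.exp (-(2 * c * r)) := by
      rw [pow_two, ← Real.exp_add]; congr 1; ring
    have haux : ∀ x A D : ℝ, x ^ 2 * (A / D ^ 2) = A * (x / D) ^ 2 := fun x A D => by
      rw [div_pow]; ring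
    rw [he1, TT, he2]
    exact haux r _ _
  simp only [hkey]
  have h1 : Tendsto (fun r : ℝ => Real.exp (-(c * r))) (𝓝[>] 0) (𝓝 1) := by
    have hcont : Continuous fun r : ℝ => Real.exp (-(c * r)) := by continuity
    simpa using (hcont.tendsto 0).mono_left nhdsWithin_le_nhds
  have h2 : Tendsto (fun r : ℝ => 1 + Real.exp (-(2 * c * r))) (𝓝[>] 0) (𝓝 2) := by
    have hcont : Continuous fun r : ℝ => 1 + Real.exp (-(2 * c * r)) := by continuity
    have h := (hcont.tendsto 0).mono_left (nhdsWithin_le_nhds (s := Set.Ioi (0:ℝ)))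
    norm_num at h
    exact h
  have h3 := tendsto_div_one_sub_exp (c := 2 * c) (by positivity)
  have h4 := h3
  have := (((h1.mul h2).mul ((h4.pow 2))).const_mul ((-1 : ℝ) ^ m))
  convert this using 2
  have hm1 : ((m : ℝ) + 1) ≠ 0 := by positivity
  field_simp [hcdef]
  ring

lemma TT_exp_le {a : ℝ} (ha : 0 < a) : TT (Real.exp (-a)) ≤ 2 / a ^ 2 := by
  set t : ℝ := Real.exp (-a) with ht
  have ht0 : 0 < t := Real.exp_pos _
  have ht1 : t < 1 := by
    rw [ht, Real.exp_lt_one_iff]; linarith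
  -- key inequality : a^2 * t ≤ (1 - t)^2
  have hkey : a ^ 2 * t ≤ (1 - t) ^ 2 := by
    have hs : a / 2 ≤ Real.sinh (a / 2) := Real.self_le_sinh_iff.mpr (by linarith)
    rw [Real.sinh_eq] at hs
    have h1 : a ≤ Real.exp (a / 2) - Real.exp (-(a / 2)) := by linarith
    have h2 : a * Real.exp (-(a / 2)) ≤ 1 - t := by
      have := mul_le_mul_of_nonneg_right h1 (Real.exp_pos (-(a / 2))).le
      calc a * Real.exp (-(a / 2))
          ≤ (Real.exp (a / 2) - Real.exp (-(a / 2))) * Real.exp (-(a / 2)) := this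
        _ = Real.exp (a / 2) * Real.exp (-(a / 2))
            - Real.exp (-(a / 2)) * Real.exp (-(a / 2)) := by ring
        _ = 1 - t := by
            rw [← Real.exp_add, ← Real.exp_add]
            norm_num [ht]
            ring_nf
    have h3 : (a * Real.exp (-(a / 2))) ^ 2 ≤ (1 - t) ^ 2 := by
      have hnn : 0 ≤ a * Real.exp (-(a / 2)) := by positivity
      exact pow_le_pow_left₀ hnn h2 2
    have hhalf : Real.exp (-(a / 2)) ^ 2 = t := by
      rw [pow_two, ← Real.exp_add, ht]
      congr 1
      ring
    calc a ^ 2 * t = (a * Real.exp (-(a / 2))) ^ 2 := by rw [mul_pow, hhalf]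
      _ ≤ (1 - t) ^ 2 := h3
  have hden : a ^ 2 * t ≤ (1 - t ^ 2) ^ 2 := by
    refine hkey.trans (pow_le_pow_left₀ (by linarith) ?_ 2)
    nlinarith
  have hnum : t * (1 + t ^ 2) ≤ 2 * t := by nlinarith
  rw [TT]
  calc t * (1 + t ^ 2) / (1 - t ^ 2) ^ 2 ≤ 2 * t / (a ^ 2 * t) :=
        div_le_div₀ (by positivity) hnum (by positivity) hden
    _ = 2 / a ^ 2 := by
        rw [mul_comm (a ^ 2) t, ← div_div, mul_comm 2 t, mul_div_assoc]
        field_simp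

lemma stepC {r : ℝ} (hr : r ∈ Set.Ioi (0 : ℝ)) (m : ℕ) :
    ‖(-1 : ℝ) ^ m * (r ^ 2 * TT (Real.exp (-(2 * π * r)) ^ (m + 1)))‖
      ≤ 1 / (2 * π ^ 2) * (1 / ((m : ℝ) + 1) ^ 2) := by
  have hr0 : 0 < r := hr
  have hπ := Real.pi_pos
  set c : ℝ := 2 * π * ((m : ℝ) + 1) with hc
  have hcpos : 0 < c := by positivity
  have he1 : Real.exp (-(2 * π * r)) ^ (m + 1) = Real.exp (-(c * r)) := by
    rw [← Real.exp_nat_mul]; congr 1; push_cast; ring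
  have ha : 0 < c * r := by positivity
  have hTpos : 0 ≤ TT (Real.exp (-(c * r))) := by
    have h0 : (0 : ℝ) < Real.exp (-(c * r)) := Real.exp_pos _
    simp only [TT]
    positivity
  have hb := TT_exp_le ha
  rw [he1, norm_mul, norm_pow, norm_neg, norm_one, one_pow, one_mul, Real.norm_eq_abs,
    abs_of_nonneg (by positivity)]
  calc r ^ 2 * TT (Real.exp (-(c * r))) ≤ r ^ 2 * (2 / (c * r) ^ 2) :=
        mul_le_mul_of_nonneg_left hb (by positivity)
    _ = 1 / (2 * π ^ 2) * (1 / ((m : ℝ) + 1) ^ 2) := by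
        rw [hc]
        field_simp

lemma hasSum_alt_inv_sq :
    HasSum (fun n : ℕ => (-1 : ℝ) ^ n * (1 / ((n : ℝ) + 1) ^ 2)) (π ^ 2 / 12) := by
  have hz : HasSum (fun n : ℕ => 1 / (n : ℝ) ^ 2) (π ^ 2 / 6) := hasSum_zeta_two
  have heven : HasSum (fun k : ℕ => 1 / (((2 * k : ℕ) : ℝ)) ^ 2) (π ^ 2 / 24) := by
    have h := hz.mul_left (1 / 4)
    convert h using 1
    · rfl
    · funext k
      push_cast
      rw [mul_pow, one_div, one_div, mul_inv]
      norm_num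
    · ring
  have hinj : Function.Injective (fun k : ℕ => 2 * k + 1) := fun x y h => by simp only [] at h; omega
  have hsodd : Summable (fun k : ℕ => 1 / (((2 * k + 1 : ℕ) : ℝ)) ^ 2) :=
    hz.summable.comp_injective hinj
  have hodd : HasSum (fun k : ℕ => 1 / (((2 * k + 1 : ℕ) : ℝ)) ^ 2) (π ^ 2 / 8) := by
    have hS := hsodd.hasSum
    have htot := HasSum.even_add_odd (f := fun n : ℕ => 1 / (n : ℝ) ^ 2) heven hS
    have huniq := hz.unique htot
    have hSval : (∑' k : ℕ, 1 / (((2 * k + 1 : ℕ) : ℝ)) ^ 2) = π ^ 2 / 8 := by linarith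
    rwa [hSval] at hS
  have hshift : HasSum (fun n : ℕ => 1 / ((n : ℝ) + 1) ^ 2) (π ^ 2 / 6) := by
    have h := (hasSum_nat_add_iff (f := fun n : ℕ => 1 / (n : ℝ) ^ 2) 1).mpr (by simpa using hz)
    convert h using 1
    · rfl
    funext n
    push_cast
    ring_nf
  have heven_g : HasSum
      (fun k : ℕ => (-1 : ℝ) ^ (2 * k) * (1 / (((2 * k : ℕ) : ℝ) + 1) ^ 2)) (π ^ 2 / 8) := by
    convert hodd using 1
    funext k
    rw [Even.neg_one_pow ⟨k, by ring⟩, one_mul]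
    push_cast
    ring_nf
  have hodd_g : HasSum
      (fun k : ℕ => (-1 : ℝ) ^ (2 * k + 1) * (1 / (((2 * k + 1 : ℕ) : ℝ) + 1) ^ 2))
      (-(π ^ 2 / 24)) := by
    have h := hshift.mul_left (-(1 / 4))
    convert h using 1
    · rfl
    · funext k
      rw [Odd.neg_one_pow ⟨k, by ring⟩]
      push_cast
      rw [neg_mul, neg_mul, one_mul, neg_inj]
      simp only [one_div, ← mul_inv]
      congr 1
      ring
    · ring
  have := HasSum.even_add_odd
    (f := fun n : ℕ => (-1 : ℝ) ^ n * (1 / ((n : ℝ) + 1) ^ 2)) heven_g hodd_g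
  convert this using 1
  ring

lemma hasSum_final :
    HasSum (fun m : ℕ => (-1 : ℝ) ^ m * (1 / (8 * π ^ 2 * ((m : ℝ) + 1) ^ 2)))
      (1 / 96 : ℝ) := by
  have hπ : (π : ℝ) ≠ 0 := Real.pi_ne_zero
  have h := hasSum_alt_inv_sq.mul_left (1 / (8 * π ^ 2))
  convert h using 1
  · rfl
  · funext m
    rw [mul_left_comm, one_div_mul_one_div]
  · field_simp
    ring

/-- With `q = e^{−2πr}`, the rescaled expected size of a self-conjugate partition
under the Gibbs uniform measure satisfies
`lim_{r→0⁺} r² ∑_{k=0}^∞ (2k+1) e^{−2π(2k+1)r}/(1+e^{−2π(2k+1)r}) = 1/96`. -/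
theorem rescaled_expected_size_limit :
    Filter.Tendsto
      (fun r : ℝ => r ^ 2 * ∑' k : ℕ,
        (2 * k + 1 : ℝ) * Real.exp (-2 * π * (2 * k + 1) * r) /
          (1 + Real.exp (-2 * π * (2 * k + 1) * r)))
      (nhdsWithin 0 (Set.Ioi 0)) (nhds (1 / 96)) := by
  have hsumb : Summable (fun m : ℕ => 1 / (2 * π ^ 2) * (1 / ((m : ℝ) + 1) ^ 2)) := by
    have h0 : Summable (fun n : ℕ => 1 / (n : ℝ) ^ 2) :=
      (summable_one_div_nat_pow (p := 2)).mpr one_lt_two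
    have h2 := (summable_nat_add_iff (f := fun n : ℕ => 1 / (n : ℝ) ^ 2) 1).mpr h0
    have h1 : Summable (fun m : ℕ => 1 / ((m : ℝ) + 1) ^ 2) :=
      h2.congr fun n => by push_cast; ring_nf
    exact h1.mul_left _
  have key := tendsto_tsum_of_dominated_convergence
    (f := fun (r : ℝ) (m : ℕ) =>
      (-1 : ℝ) ^ m * (r ^ 2 * TT (Real.exp (-(2 * π * r)) ^ (m + 1))))
    (g := fun m : ℕ => (-1 : ℝ) ^ m * (1 / (8 * π ^ 2 * ((m : ℝ) + 1) ^ 2)))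
    (bound := fun m : ℕ => 1 / (2 * π ^ 2) * (1 / ((m : ℝ) + 1) ^ 2))
    hsumb stepB (by
      filter_upwards [self_mem_nhdsWithin] with r hr
      exact stepC hr)
  rw [hasSum_final.tsum_eq] at key
  refine key.congr' ?_
  filter_upwards [self_mem_nhdsWithin] with r hr
  have hr0 : (0 : ℝ) < r := hr
  rw [stepA hr0, ← tsum_mul_left]
  exact tsum_congr fun m => by ring
end
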